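/- Let G = (V,E) be a finite, simple, undirected, connected graph, and let S, T ⊆ V be connected vertex sets with |S| = |T| = n and S ∩ T = ∅, and let d = min_{(s,t)∈S×T} dist(s,t). Then there exists a connected vertex set Q ⊆ V with |Q| = n and Q ∩ T ≠ ∅, together with a valid plan from S to Q whose makespan is exactly d; moreover d ≤ diam(G), where diam(G) = max_{u,v∈V} dist(u,v). -/

import Mathlib

open SimpleGraph

variable {V : Type*}

/-- A vertex set `Q` is connected if the subgraph of `G` induced by `Q` is connected. -/
def ConnSet (G : SimpleGraph V) (Q : Finset V) : Prop :=
  (G.induce (Q : Set V)).Connected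

/-- `Q'` is reachable from `Q` in one step: there is a bijection `φ` between the two
vertex sets moving every agent to an adjacent vertex or keeping it in place,
with no swap conflict. -/
def OneStep (G : SimpleGraph V) (Q Q' : Finset V) : Prop :=
  ∃ φ : {x // x ∈ Q} ≃ {x // x ∈ Q'},
    (∀ v : {x // x ∈ Q}, ((φ v : V) = (v : V)) ∨ G.Adj (v : V) ((φ v : V))) ∧
    ∀ u v : {x // x ∈ Q}, (u : V) ≠ (v : V) →
      ¬(((φ u : V) = (v : V)) ∧ ((φ v : V) = (u : V)))

/-- A valid plan from `S` to `T` with makespan `tstar`: a sequence of vertex sets,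
each of size `n` and connected, starting at `S`, ending at `T`, with each
consecutive pair one-step reachable. -/
def ValidPlan (G : SimpleGraph V) (n : ℕ) (S T : Finset V) (tstar : ℕ)
    (P : ℕ → Finset V) : Prop :=
  P 0 = S ∧ P tstar = T ∧
  (∀ k ≤ tstar, (P k).card = n ∧ ConnSet G (P k)) ∧
  ∀ k < tstar, OneStep G (P k) (P (k + 1))

/-- The diameter of a (finite) graph: the maximum of `dist u v` over all pairs. -/
noncomputable def graphDiam (G : SimpleGraph V) : ℕ :=
  sSup (Set.range fun p : V × V => G.dist p.1 p.2)

/-- `min_{(a,b) ∈ A × B} dist(a,b)`. -/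
noncomputable def setDist (G : SimpleGraph V) (A B : Finset V) : ℕ :=
  sInf {d | ∃ a ∈ A, ∃ b ∈ B, G.dist a b = d}

/-!
Let `s ∈ S` and `t ∈ T` realise `d`. We move the configuration so that after `k` steps its
vertices closest to `t` are at distance exactly `d - k`. In one step, take a closest vertex `c`
and a neighbour `b` of `c` one step closer to `t`; `b` is free, and `Q ∪ {b}` is connected.
Remove a vertex `x ≠ b` whose deletion keeps `Q ∪ {b}` connected (a tree has two leaves, so
a spanning tree provides one), and move the agents on a path `x ⇝ c → b` one vertex forward.
After `d` steps `t` is occupied.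
-/

namespace SimpleGraph

variable {G : SimpleGraph V}

lemma Connected.exists_ne_connected_induce_compl_singleton [Finite V] [Nontrivial V]
    (hconn : G.Connected) (w : V) : ∃ v ≠ w, (G.induce {v}ᶜ).Connected := by
  obtain ⟨T, hTG, hT⟩ := hconn.exists_isTree_le
  have := Fintype.ofFinite V
  classical
  obtain ⟨u, v, huv, hu, hv⟩ := hT.exists_ne_and_degree_eq_one
  have hleaf : ∀ x, T.degree x = 1 → (G.induce {x}ᶜ).Connected := fun x hx =>
    (hT.connected.induce_compl_singleton_of_degree_eq_one hx).mono (by tauto)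
  by_cases huw : u = w
  · exact ⟨v, fun hvw => huv (huw.trans hvw.symm), hleaf v hv⟩
  · exact ⟨u, huw, hleaf u hu⟩

lemma Connected.exists_adj_dist_add_one_eq (hG : G.Connected) {c t : V} (hct : c ≠ t) :
    ∃ b, G.Adj c b ∧ G.dist b t + 1 = G.dist c t := by
  obtain ⟨p, hp⟩ := hG.exists_walk_length_eq_dist c t
  cases p with
  | nil => exact absurd rfl hct
  | @cons _ b _ hcb q =>
    refine ⟨b, hcb, le_antisymm ?_ ?_⟩
    · have := G.dist_le q
      simp only [Walk.length_cons] at hp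
      omega
    · calc G.dist c t ≤ G.dist c b + G.dist b t := hG.dist_triangle
        _ = G.dist b t + 1 := by rw [dist_eq_one_iff_adj.2 hcb, add_comm]

namespace Walk

variable {a b v : V} {p : G.Walk a b}

lemma exists_getVert_eq_of_mem_support_of_ne (hv : v ∈ p.support) (hvb : v ≠ b) :
    ∃ i < p.length, p.getVert i = v := by
  obtain ⟨i, rfl, hi⟩ := mem_support_iff_exists_getVert.1 hv
  refine ⟨i, lt_of_le_of_ne hi ?_, rfl⟩
  rintro rfl
  exact hvb p.getVert_length

namespace IsPath

variable [DecidableEq V]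

lemma formPerm_support_getVert (hp : p.IsPath) {i : ℕ} (hi : i < p.length) :
    p.support.formPerm (p.getVert i) = p.getVert (i + 1) := by
  rw [p.getVert_eq_support_getElem hi.le, p.getVert_eq_support_getElem hi,
    List.formPerm_apply_lt_getElem _ hp.support_nodup]

lemma formPerm_support_end (hp : p.IsPath) : p.support.formPerm b = a := by
  simpa using List.formPerm_apply_getElem _ hp.support_nodup p.length (by simp)

lemma adj_formPerm_support (hp : p.IsPath) (hv : v ∈ p.support) (hvb : v ≠ b) :
    G.Adj v (p.support.formPerm v) := by
  obtain ⟨i, hi, rfl⟩ := exists_getVert_eq_of_mem_support_of_ne hv hvb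
  rw [hp.formPerm_support_getVert hi]
  exact p.adj_getVert_succ hi

lemma formPerm_support_apply_apply_ne (hp : p.IsPath) (hv : v ∈ p.support) (hvb : v ≠ b)
    (hσv : p.support.formPerm v ≠ b) : p.support.formPerm (p.support.formPerm v) ≠ v := by
  obtain ⟨i, hi, rfl⟩ := exists_getVert_eq_of_mem_support_of_ne hv hvb
  rw [hp.formPerm_support_getVert hi] at hσv ⊢
  have hi' : i + 1 < p.length := lt_of_le_of_ne hi fun h => hσv (h ▸ p.getVert_length)
  rw [hp.formPerm_support_getVert hi']
  intro h
  have := hp.getVert_injOn (by simp only [Set.mem_ofPred_eq]; omega)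
    (by simp only [Set.mem_ofPred_eq]; omega) h
  omega

end IsPath

end Walk

end SimpleGraph

variable {G : SimpleGraph V}

namespace ConnSet

lemma nonempty {R : Finset V} (hR : ConnSet G R) : R.Nonempty := by
  obtain ⟨⟨x, hx⟩⟩ := Connected.nonempty hR
  exact ⟨x, hx⟩

lemma exists_isPath {R : Finset V} (hR : ConnSet G R) {u v : V} (hu : u ∈ R) (hv : v ∈ R) :
    ∃ p : G.Walk u v, p.IsPath ∧ ∀ x ∈ p.support, x ∈ R := by
  obtain ⟨q, hq⟩ := hR.preconnected.exists_isPath ⟨u, hu⟩ ⟨v, hv⟩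
  refine ⟨q.map (Embedding.induce _).toHom, hq.map Subtype.val_injective, ?_⟩
  intro x hx
  replace hx : x ∈ (q.map (Embedding.induce (R : Set V)).toHom).support := hx
  rw [Walk.support_map, List.mem_map] at hx
  obtain ⟨y, -, rfl⟩ := hx
  exact y.2

lemma insert_of_adj [DecidableEq V] {Q : Finset V} (hQ : ConnSet G Q) {c b : V} (hc : c ∈ Q)
    (hcb : G.Adj c b) : ConnSet G (insert b Q) := by
  have hunion : (↑(insert b Q) : Set V) = {c, b} ∪ ↑Q := by
    ext x
    simp only [Finset.coe_insert, Set.mem_insert_iff, Set.mem_union, Set.mem_singleton_iff,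
      Finset.mem_coe]
    constructor
    · tauto
    · rintro ((rfl | rfl) | h) <;> simp [*]
  rw [ConnSet, hunion]
  exact induce_union_connected (induce_pair_connected_of_adj hcb).preconnected
    hQ.preconnected ⟨c, by simp, hc⟩

lemma exists_ne_connSet_erase [DecidableEq V] {R : Finset V} (hR : ConnSet G R) (hcard : 2 ≤ R.card)
    {w : V} (hw : w ∈ R) : ∃ x ∈ R, x ≠ w ∧ ConnSet G (R.erase x) := by
  have : Nontrivial R := Finset.one_lt_card_iff_nontrivial.1 hcard |>.coe_sort
  obtain ⟨⟨x, hx⟩, hxw, hconn⟩ :=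
    Connected.exists_ne_connected_induce_compl_singleton hR ⟨w, hw⟩
  refine ⟨x, hx, fun h => hxw (Subtype.ext h), ?_⟩
  let f : ((G.induce (R : Set V)).induce {⟨x, hx⟩}ᶜ) →g G.induce (R.erase x : Set V) :=
    { toFun := fun y => ⟨y.1.1, Finset.mem_erase.2 ⟨fun h => y.2 (Subtype.ext h), y.1.2⟩⟩
      map_rel' := fun h => h }
  refine hconn.map f fun ⟨y, hy⟩ => ?_
  obtain ⟨hyx, hyR⟩ := Finset.mem_erase.1 hy
  exact ⟨⟨⟨y, hyR⟩, fun h => hyx (congrArg Subtype.val h)⟩, rfl⟩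

end ConnSet

lemma oneStep_of_perm {Q Q' : Finset V} (σ : Equiv.Perm V) (hmem : ∀ v, v ∈ Q ↔ σ v ∈ Q')
    (hmove : ∀ v ∈ Q, σ v = v ∨ G.Adj v (σ v))
    (hswap : ∀ u ∈ Q, σ u ∈ Q → σ (σ u) = u → σ u = u) : OneStep G Q Q' := by
  refine ⟨σ.subtypeEquiv hmem, fun v => hmove v v.2, ?_⟩
  rintro ⟨u, hu⟩ ⟨v, hv⟩ huv ⟨hσu, hσv⟩
  replace hσu : σ u = v := hσu
  replace hσv : σ v = u := hσv
  exact huv ((hswap u hu (hσu ▸ hv) (hσu ▸ hσv)).symm.trans hσu)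

/-- The agents on `p` each move one vertex forward: the rotation `p.support.formPerm`, whose
wrap-around move `b ↦ a` carries no agent. -/
lemma oneStep_of_isPath [DecidableEq V] {Q : Finset V} {a b : V} {p : G.Walk a b}
    (hp : p.IsPath) (ha : a ∈ Q) (hb : b ∉ Q) (hpQ : ∀ x ∈ p.support, x ∈ insert b Q) :
    OneStep G Q (insert b (Q.erase a)) := by
  set σ := p.support.formPerm
  have hab : a ≠ b := fun h => hb (h ▸ ha)
  have hσb : σ b = a := hp.formPerm_support_end
  refine oneStep_of_perm σ (fun v => ?_) (fun v hv => ?_) (fun u hu hσu hσσu => ?_)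
  · by_cases hvp : v ∈ p.support
    · by_cases hvb : v = b
      · subst hvb
        simp [hσb, hb, hab]
      · have hvQ : v ∈ Q := (Finset.mem_insert.1 (hpQ v hvp)).resolve_left hvb
        have hσva : σ v ≠ a := fun h => hvb (σ.injective (h.trans hσb.symm))
        have := hpQ _ (List.formPerm_apply_mem_of_mem hvp)
        simp only [Finset.mem_insert, Finset.mem_erase] at this ⊢
        tauto
    · have hva : v ≠ a := fun h => hvp (h ▸ p.start_mem_support)
      have hvb : v ≠ b := fun h => hvp (h ▸ p.end_mem_support)
      simp [σ, List.formPerm_apply_of_notMem hvp, hva, hvb]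
  · by_cases hvp : v ∈ p.support
    · exact Or.inr (hp.adj_formPerm_support hvp fun h => hb (h ▸ hv))
    · exact Or.inl (List.formPerm_apply_of_notMem hvp)
  · by_cases hup : u ∈ p.support
    · exact absurd hσσu (hp.formPerm_support_apply_apply_ne hup (fun h => hb (h ▸ hu))
        fun h => hb (h ▸ hσu))
    · exact List.formPerm_apply_of_notMem hup

namespace ConnSet

lemma oneStep_insert_erase [DecidableEq V] {Q : Finset V} (hQ : ConnSet G Q) {a c b : V}
    (ha : a ∈ Q) (hc : c ∈ Q) (hb : b ∉ Q) (hcb : G.Adj c b) :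
    OneStep G Q (insert b (Q.erase a)) := by
  obtain ⟨p, hp, hpQ⟩ := (hQ.insert_of_adj hc hcb).exists_isPath (Finset.mem_insert_of_mem ha)
    (Finset.mem_insert_self b Q)
  exact oneStep_of_isPath hp ha hb hpQ

end ConnSet

lemma exists_dist_eq_setDist {A B : Finset V} (hA : A.Nonempty) (hB : B.Nonempty) :
    ∃ a ∈ A, ∃ b ∈ B, G.dist a b = setDist G A B := by
  obtain ⟨a, ha⟩ := hA
  obtain ⟨b, hb⟩ := hB
  exact Nat.sInf_mem (s := {d | ∃ a ∈ A, ∃ b ∈ B, G.dist a b = d})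
    ⟨G.dist a b, a, ha, b, hb, rfl⟩

lemma setDist_le_dist {A B : Finset V} {a b : V} (ha : a ∈ A) (hb : b ∈ B) :
    setDist G A B ≤ G.dist a b :=
  Nat.sInf_le ⟨a, ha, b, hb, rfl⟩

namespace ValidPlan

lemma refl {n : ℕ} {Q : Finset V} (hQn : Q.card = n) (hQ : ConnSet G Q) :
    ValidPlan G n Q Q 0 fun _ => Q :=
  ⟨rfl, rfl, fun _ _ => ⟨hQn, hQ⟩, fun _ h => absurd h (Nat.not_lt_zero _)⟩

lemma cons {n k : ℕ} {Q R T : Finset V} {P : ℕ → Finset V} (hQn : Q.card = n)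
    (hQ : ConnSet G Q) (hQR : OneStep G Q R) (hP : ValidPlan G n R T k P) :
    ValidPlan G n Q T (k + 1) fun i => if i = 0 then Q else P (i - 1) := by
  obtain ⟨hP0, hPk, hPsets, hPsteps⟩ := hP
  refine ⟨rfl, by simpa using hPk, fun i hi => ?_, fun i hi => ?_⟩
  · rcases i with _ | i
    · simpa using ⟨hQn, hQ⟩
    · simpa using hPsets i (by omega)
  · rcases i with _ | i
    · simpa [hP0] using hQR
    · simpa using hPsteps i (by omega)

end ValidPlan

namespace ConnSet

lemma exists_oneStep_closer [DecidableEq V] (hG : G.Connected) {Q : Finset V}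
    (hQ : ConnSet G Q) {c t : V} (hc : c ∈ Q) (hct : c ≠ t)
    (hmin : ∀ x ∈ Q, G.dist c t ≤ G.dist x t) :
    ∃ Q', OneStep G Q Q' ∧ Q'.card = Q.card ∧ ConnSet G Q' ∧
      ∃ b ∈ Q', G.dist b t + 1 = G.dist c t ∧ ∀ x ∈ Q', G.dist b t ≤ G.dist x t := by
  obtain ⟨b, hcb, hbt⟩ := hG.exists_adj_dist_add_one_eq hct
  have hbQ : b ∉ Q := fun h => by have := hmin b h; omega
  have hcard : 2 ≤ (insert b Q).card := by
    rw [Finset.card_insert_of_notMem hbQ]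
    have := hQ.nonempty.card_pos
    omega
  obtain ⟨x, hxR, hxb, hconn⟩ :=
    (hQ.insert_of_adj hc hcb).exists_ne_connSet_erase hcard (Finset.mem_insert_self b Q)
  have hxQ : x ∈ Q := (Finset.mem_insert.1 hxR).resolve_left hxb
  rw [Finset.erase_insert_of_ne (Ne.symm hxb)] at hconn
  refine ⟨_, hQ.oneStep_insert_erase hxQ hc hbQ hcb, ?_, hconn, b,
    Finset.mem_insert_self _ _, hbt, fun y hy => ?_⟩
  · rw [Finset.card_insert_of_notMem fun h => hbQ (Finset.mem_of_mem_erase h),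
      Finset.card_erase_add_one hxQ]
  · rcases Finset.mem_insert.1 hy with rfl | hy
    · exact le_rfl
    · have := hmin y (Finset.mem_of_mem_erase hy)
      omega

lemma exists_validPlan_of_dist_eq [DecidableEq V] (hG : G.Connected) {t : V} (k : ℕ)
    {Q : Finset V} {c : V} (hQ : ConnSet G Q) (hc : c ∈ Q) (hct : G.dist c t = k)
    (hmin : ∀ x ∈ Q, k ≤ G.dist x t) :
    ∃ Q' P, t ∈ Q' ∧ ValidPlan G Q.card Q Q' k P := by
  induction k generalizing Q c with
  | zero =>
    rw [hG.dist_eq_zero_iff] at hct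
    exact ⟨Q, _, hct ▸ hc, ValidPlan.refl rfl hQ⟩
  | succ k ih =>
    have hct' : c ≠ t := by
      rintro rfl
      simp at hct
    obtain ⟨Q₁, hQQ₁, hQ₁n, hQ₁, b, hb, hbt, hbmin⟩ :=
      hQ.exists_oneStep_closer hG hc hct' (hct ▸ hmin)
    have hbk : G.dist b t = k := by omega
    obtain ⟨Q', P, htQ', hP⟩ := ih hQ₁ hb hbk (hbk ▸ hbmin)
    exact ⟨Q', _, htQ', ValidPlan.cons rfl hQ hQQ₁ (hQ₁n ▸ hP)⟩

end ConnSet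

theorem stmt11_general [Fintype V] [DecidableEq V] (G : SimpleGraph V) (hG : G.Connected)
    (n : ℕ) (S T : Finset V)
    (hSconn : ConnSet G S) (hTconn : ConnSet G T)
    (hScard : S.card = n)
    (d : ℕ) (hd : d = setDist G S T) :
    (∃ (Q : Finset V) (P : ℕ → Finset V),
      Q.card = n ∧ ConnSet G Q ∧ (Q ∩ T).Nonempty ∧ ValidPlan G n S Q d P) ∧
    d ≤ graphDiam G := by
  obtain ⟨s, hs, t, ht, hst⟩ := exists_dist_eq_setDist (G := G) hSconn.nonempty hTconn.nonempty
  rw [← hd] at hst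
  have hSt : ∀ x ∈ S, d ≤ G.dist x t := fun x hx => hd ▸ setDist_le_dist hx ht
  obtain ⟨Q, P, htQ, hP⟩ := hSconn.exists_validPlan_of_dist_eq hG d hs hst hSt
  rw [hScard] at hP
  obtain ⟨hQn, hQ⟩ := hP.2.1 ▸ hP.2.2.1 d le_rfl
  refine ⟨⟨Q, P, hQn, hQ, ⟨t, Finset.mem_inter.2 ⟨htQ, ht⟩⟩, hP⟩, ?_⟩
  exact hst ▸ le_csSup (Set.finite_range _).bddAbove ⟨(s, t), rfl⟩

/-- If `S` and `T` are disjoint connected vertex sets of size `n` and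
`d = min_{(s,t) ∈ S × T} dist(s,t)`, then there are a connected vertex set `Q`
of size `n` with `Q ∩ T ≠ ∅` and a valid plan from `S` to `Q` whose makespan is
exactly `d`; moreover `d ≤ diam(G)`. -/
theorem stmt11 [Fintype V] [DecidableEq V] (G : SimpleGraph V) (hG : G.Connected)
    (n : ℕ) (S T : Finset V)
    (hSconn : ConnSet G S) (hTconn : ConnSet G T)
    (hScard : S.card = n) (hTcard : T.card = n)
    (hdisj : S ∩ T = ∅)
    (d : ℕ) (hd : d = setDist G S T) :
    (∃ (Q : Finset V) (P : ℕ → Finset V),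
      Q.card = n ∧ ConnSet G Q ∧ (Q ∩ T).Nonempty ∧ ValidPlan G n S Q d P) ∧
    d ≤ graphDiam G :=
  stmt11_general G hG n S T hSconn hTconn hScard d hd
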